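/- arXiv:1912.04186 — 2 statements merged into one kernel-verified Lean document; each statement's English description precedes it below -/
import Mathlib

section
/- Fix positive integers n, m, d and a real constant c > 0, and set R = C(n+m, n) − 1 (so that R + 1 is the number of degree-m monomials in n+1 variables). Assume the following Schlickewei-type hypothesis for projective R-space: for every number field K with fixed algebraic closure K̄, every finite set S of places of K together with a fixed extension of each normalized absolute value |·|_v (v ∈ S) to K̄, every choice, for each v ∈ S, of R+1 linearly independent linear forms ℓ_{v,0}, …, ℓ_{v,R} ∈ K̄[y_0,…,y_R], and every δ > 0, there exist a real constant C and finitely many proper linear subspaces Λ_1, …, Λ_h of ℙ^R(K̄), each having field of definition of degree at most d over K, such that every point x ∈ ℙ^R(K̄) with [K(x):K] ≤ d not lying on any of the hyperplanes ℓ_{v,i} = 0 and satisfying Σ_{v∈S} Σ_{i=0}^{R} log( max_j |x_j|_v / |ℓ_{v,i}(x)|_v ) > (c+δ)·h(x) + C lies in Λ_1 ∪ ⋯ ∪ Λ_h. Then the following conclusion holds for degree-m forms on ℙ^n: for every number field K, every finite extension F of K inside K̄, every finite set S of places of K with fixed extensions of the |·|_v to K̄, every choice for each v ∈ S of R+1 homogeneous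 forms s_{v,0}, …, s_{v,R} ∈ F[x_0,…,x_n] of degree m that are linearly independent over F, and every δ > 0, there exist a real constant C′ and finitely many subsets Z_1, …, Z_h of ℙ^n(K̄), each the common zero locus of a nonzero linear space of degree-m homogeneous forms whose coefficients lie in an extension of K of degree at most d, such that every point x = [x_0:…:x_n] ∈ ℙ^n(K̄) with [K(x):K] ≤ d and s_{v,i}(x) ≠ 0 for all v ∈ S and 0 ≤ i ≤ R, satisfying Σ_{v∈S} Σ_{i=0}^{R} log( (max_j |x_j|_v)^m / |s_{v,i}(x)|_v ) > (c+δ)·m·h(x) + C′, lies in Z_1 ∪ ⋯ ∪ Z_h. -/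
open NumberField IsDedekindDomain

open scoped Classical

set_option maxHeartbeats 1000000
set_option synthInstance.maxHeartbeats 400000

/-- The exponent of the height-one prime `v` in the fractional ideal generated by a nonzero
`x ∈ E` (the `v`-adic order of `x`), read off from the `v`-adic valuation. -/
noncomputable def finExp {E : Type*} [Field E] [NumberField E]
    (v : HeightOneSpectrum (𝓞 E)) (x : E) : ℤ :=
  if h : v.valuation E x = 0 then 0 else -Multiplicative.toAdd (WithZero.unzero h)

/-- A place of the number field `E`: either an infinite place or a finite place, the latter
given by a height-one prime of the ring of integers. -/
abbrev NFPlace (E : Type*) [Field E] [NumberField E] :=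
  InfinitePlace E ⊕ HeightOneSpectrum (𝓞 E)

/-- The normalized absolute value attached to a place of the number field `E`, normalized so
that the product formula holds with all multiplicities equal to one:  for an infinite place
`w` it is `|x|_w = w(x)^(mult w / [E:ℚ])`, and for a finite place `v` over the rational prime
`p` it is `|x|_v = N(v)^(-ord_v(x)/[E:ℚ]) = |N_{E_v/ℚ_p}(x)|_p^(1/[E:ℚ])`. -/
noncomputable def placeVal {E : Type*} [Field E] [NumberField E] :
    NFPlace E → E → ℝ
  | Sum.inl w => fun x => (w x) ^ ((w.mult : ℝ) / (Module.finrank ℚ E))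
  | Sum.inr v => fun x => if x = 0 then 0 else
      (Ideal.absNorm v.asIdeal : ℝ) ^ (-(finExp v x : ℝ) / (Module.finrank ℚ E))

/-- The absolute logarithmic height `h(x) = Σ_{w ∈ M_E} log max_j |x_j|_w` of a coordinate
vector `x ∈ E^{r+1}` with respect to the normalized absolute values of the number field `E`.
(For nonzero `x` only finitely many finite places contribute, so the finite-place part is a
genuine finite sum, expressed here with `finsum`.) -/
noncomputable def logHeightVec (E : Type*) [Field E] [NumberField E] {r : ℕ}
    (x : Fin (r + 1) → E) : ℝ :=
  (∑ w : InfinitePlace E,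
      Real.log (Finset.univ.sup' ⟨0, Finset.mem_univ 0⟩ fun j => placeVal (Sum.inl w) (x j)))
    + ∑ᶠ v : HeightOneSpectrum (𝓞 E),
        Real.log (Finset.univ.sup' ⟨0, Finset.mem_univ 0⟩ fun j => placeVal (Sum.inr v) (x j))

/-- `f : K̄ → ℝ` is a fixed extension to the algebraic closure `K̄` of the normalized
absolute value `|·|_p` of the place `p` of the number field `K`:  it is multiplicative and
nonnegative, and it restricts to `placeVal p` on `K`. -/
def IsPlaceExtension (K : Type*) [Field K] [NumberField K] (p : NFPlace K)
    (f : AlgebraicClosure K → ℝ) : Prop :=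
  (∀ a b : AlgebraicClosure K, f (a * b) = f a * f b) ∧
    (∀ a : AlgebraicClosure K, 0 ≤ f a) ∧
    (∀ y : K, f (algebraMap K (AlgebraicClosure K) y) = placeVal p y)

/-- The Schlickewei-type hypothesis for projective `R`-space, degree `d` and constant `c`,
over the number field `K`:  for every finite set `S` of places of `K` with fixed extensions
`f v` of the normalized absolute values to `K̄`, every choice for `v ∈ S` of `R + 1` linearly
independent linear forms (given by coefficient vectors `ℓ v i`) with coefficients in `K̄`,
and every `δ > 0`, there are a constant `C` and finitely many proper linear subspaces of
`ℙ^R(K̄)` (each the zero locus of a family of linear forms, not all zero, with coefficients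
in an extension `E i` of `K` of degree at most `d`) containing every point of `ℙ^R(K̄)` of
degree at most `d` over `K` (represented by a nonzero coordinate vector `x` over an
intermediate number field `F` with `[F : K] ≤ d`) avoiding the given hyperplanes and
satisfying `Σ_{v ∈ S} Σ_i log(max_j |x_j|_v / |ℓ_{v,i}(x)|_v) > (c + δ)·h(x) + C`. -/
def SchlickeweiLinearHyp (d R : ℕ) (c : ℝ) (K : Type*) [Field K] [NumberField K] : Prop :=
  ∀ (S : Finset (NFPlace K)) (f : NFPlace K → AlgebraicClosure K → ℝ),
    (∀ v ∈ S, IsPlaceExtension K v (f v)) →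
    ∀ ℓ : NFPlace K → Fin (R + 1) → Fin (R + 1) → AlgebraicClosure K,
      (∀ v ∈ S, LinearIndependent (AlgebraicClosure K) (ℓ v)) →
      ∀ δ : ℝ, 0 < δ →
        ∃ (C : ℝ) (h : ℕ) (E : Fin h → IntermediateField K (AlgebraicClosure K))
            (Φ : (i : Fin h) → Set (Fin (R + 1) → E i)),
          (∀ i, FiniteDimensional K (E i) ∧ Module.finrank K (E i) ≤ d) ∧
          (∀ i, ∃ φ ∈ Φ i, φ ≠ 0) ∧
          (∀ (F : IntermediateField K (AlgebraicClosure K)) [NumberField F],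
            Module.finrank K F ≤ d →
            ∀ x : Fin (R + 1) → F, x ≠ 0 →
              (∀ v ∈ S, ∀ i : Fin (R + 1),
                (∑ j, ℓ v i j * (x j : AlgebraicClosure K)) ≠ 0) →
              (c + δ) * logHeightVec F x + C <
                  ∑ v ∈ S, ∑ i : Fin (R + 1),
                    Real.log
                      ((Finset.univ.sup' ⟨0, Finset.mem_univ 0⟩ fun j =>
                          f v (x j : AlgebraicClosure K)) /
                        f v (∑ j, ℓ v i j * (x j : AlgebraicClosure K))) →
              ∃ i : Fin h, ∀ φ ∈ Φ i,
                ∑ j, (φ j : AlgebraicClosure K) * (x j : AlgebraicClosure K) = 0)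
section AuxPlaceVal

variable {E : Type*} [Field E] [NumberField E]

lemma finExp_mul (v : HeightOneSpectrum (𝓞 E)) {a b : E} (ha : a ≠ 0) (hb : b ≠ 0) :
    finExp v (a * b) = finExp v a + finExp v b := by
  have hva : v.valuation E a ≠ 0 := (Valuation.ne_zero_iff _).mpr ha
  have hvb : v.valuation E b ≠ 0 := (Valuation.ne_zero_iff _).mpr hb
  have hvab : v.valuation E (a * b) ≠ 0 := by
    rw [map_mul]; exact mul_ne_zero hva hvb
  have key : WithZero.unzero hvab = WithZero.unzero hva * WithZero.unzero hvb := by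
    have : ((WithZero.unzero hvab : Multiplicative ℤ) : WithZero (Multiplicative ℤ))
        = ((WithZero.unzero hva * WithZero.unzero hvb : Multiplicative ℤ) : WithZero (Multiplicative ℤ)) := by
      rw [WithZero.coe_unzero, WithZero.coe_mul, WithZero.coe_unzero, WithZero.coe_unzero,
        map_mul]
    exact_mod_cast this
  simp only [finExp, dif_neg hva, dif_neg hvb, dif_neg hvab, key, toAdd_mul]
  ring

lemma finExp_one (v : HeightOneSpectrum (𝓞 E)) : finExp v (1 : E) = 0 := by
  have hv1 : v.valuation E (1 : E) ≠ 0 := by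
    rw [map_one]; exact one_ne_zero
  have key : WithZero.unzero hv1 = (1 : Multiplicative ℤ) := by
    have : ((WithZero.unzero hv1 : Multiplicative ℤ) : WithZero (Multiplicative ℤ)) = ((1 : Multiplicative ℤ) : WithZero (Multiplicative ℤ)) := by
      rw [WithZero.coe_unzero, map_one, WithZero.coe_one]
    exact_mod_cast this
  simp only [finExp, dif_neg hv1, key]
  rfl

lemma absNorm_pos (v : HeightOneSpectrum (𝓞 E)) : (0 : ℝ) < (Ideal.absNorm v.asIdeal : ℝ) := by
  have h : Ideal.absNorm v.asIdeal ≠ 0 := by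
    rw [ne_eq, Ideal.absNorm_eq_zero_iff]
    exact v.ne_bot
  exact_mod_cast Nat.pos_of_ne_zero h

lemma placeVal_nonneg (p : NFPlace E) (a : E) : 0 ≤ placeVal p a := by
  cases p with
  | inl w => exact Real.rpow_nonneg (AbsoluteValue.nonneg _ _) _
  | inr v =>
    simp only [placeVal]
    split
    · exact le_rfl
    · exact (Real.rpow_pos_of_pos (absNorm_pos v) _).le

lemma placeVal_one (p : NFPlace E) : placeVal p (1 : E) = 1 := by
  cases p with
  | inl w =>
    simp only [placeVal, map_one, Real.one_rpow]
  | inr v =>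
    simp only [placeVal, one_ne_zero, if_false, finExp_one]
    norm_num

lemma placeVal_mul (p : NFPlace E) (a b : E) :
    placeVal p (a * b) = placeVal p a * placeVal p b := by
  cases p with
  | inl w =>
    simp only [placeVal, map_mul]
    exact Real.mul_rpow (AbsoluteValue.nonneg _ _) (AbsoluteValue.nonneg _ _)
  | inr v =>
    rcases eq_or_ne a 0 with rfl | ha
    · simp [placeVal]
    rcases eq_or_ne b 0 with rfl | hb
    · simp [placeVal]
    have hab : a * b ≠ 0 := mul_ne_zero ha hb
    simp only [placeVal, if_neg ha, if_neg hb, if_neg hab, finExp_mul v ha hb]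
    rw [← Real.rpow_add (absNorm_pos v)]
    congr 1
    push_cast
    ring

lemma placeVal_pos (p : NFPlace E) {a : E} (ha : a ≠ 0) : 0 < placeVal p a := by
  cases p with
  | inl w =>
    exact Real.rpow_pos_of_pos (AbsoluteValue.pos _ ha) _
  | inr v =>
    simp only [placeVal, if_neg ha]
    exact Real.rpow_pos_of_pos (absNorm_pos v) _

end AuxPlaceVal
section AuxSup

/-- `sup'`-compatibility of a multiplicative nonnegative function with monomial families. -/
lemma sup'_monomial_pow {A : Type*} [CommMonoid A] {n R m : ℕ} (g : A → ℝ)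
    (gmul : ∀ a b, g (a * b) = g a * g b) (g1 : g 1 = 1) (gpos : ∀ a, 0 ≤ g a)
    (α : Fin (R + 1) → (Fin (n + 1) →₀ ℕ))
    (hdeg : ∀ j, ∑ k, α j k = m)
    (hsingle : ∀ k, ∃ j, α j = Finsupp.single k m)
    (x : Fin (n + 1) → A) :
    (Finset.univ.sup' ⟨0, Finset.mem_univ 0⟩ fun j => g (∏ k, x k ^ α j k))
      = (Finset.univ.sup' ⟨0, Finset.mem_univ 0⟩ fun k => g (x k)) ^ m := by
  set G : A →* ℝ := { toFun := g, map_one' := g1, map_mul' := gmul } with hG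
  have hg : ∀ j, g (∏ k, x k ^ α j k) = ∏ k, g (x k) ^ α j k := by
    intro j
    have := map_prod G (fun k => x k ^ α j k) Finset.univ
    simp only [map_pow] at this
    exact this
  set T := Finset.univ.sup' ⟨0, Finset.mem_univ 0⟩ fun k => g (x k) with hT
  apply le_antisymm
  · apply Finset.sup'_le
    intro j _
    rw [hg]
    calc ∏ k, g (x k) ^ α j k
        ≤ ∏ k : Fin (n + 1), T ^ α j k := by
          apply Finset.prod_le_prod (fun k _ => pow_nonneg (gpos _) _)
          intro k _
          exact pow_le_pow_left₀ (gpos _) (Finset.le_sup' (fun k => g (x k)) (Finset.mem_univ k)) _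
      _ = T ^ (∑ k, α j k) := Finset.prod_pow_eq_pow_sum _ _ _
      _ = T ^ m := by rw [hdeg]
  · obtain ⟨k₀, _, hk₀⟩ := Finset.exists_mem_eq_sup' ⟨0, Finset.mem_univ 0⟩ fun k => g (x k)
    obtain ⟨j₀, hj₀⟩ := hsingle k₀
    have hval : g (∏ k, x k ^ α j₀ k) = g (x k₀) ^ m := by
      rw [hg, hj₀]
      rw [Finset.prod_eq_single k₀]
      · rw [Finsupp.single_eq_same]
      · intro k _ hk
        rw [Finsupp.single_eq_of_ne' (Ne.symm hk), pow_zero]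
      · intro h; exact absurd (Finset.mem_univ k₀) h
    rw [hT, hk₀, ← hval]
    exact Finset.le_sup' (fun j => g (∏ k, x k ^ α j k)) (Finset.mem_univ j₀)

/-- Existence of an indexing of the degree-`m` monomials in `n+1` variables by `Fin (R+1)`. -/
lemma exists_mon_index (n m R : ℕ) (hR : R + 1 = (n + m).choose n) :
    ∃ α : Fin (R + 1) → (Fin (n + 1) →₀ ℕ),
      Function.Injective α ∧ (∀ j, (α j).degree = m) ∧
      (∀ d : Fin (n + 1) →₀ ℕ, d.degree = m → ∃ j, α j = d) := by
  classical
  let M := { d : Fin (n + 1) →₀ ℕ // d.degree = m }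
  have hcard : ∀ d : Fin (n + 1) →₀ ℕ, d.degree = Multiset.card (Finsupp.toMultiset d) := by
    intro d
    rw [Finsupp.card_toMultiset]
    rfl
  let e1 : M ≃ Sym (Fin (n + 1)) m :=
    Equiv.subtypeEquiv (Multiset.toFinsupp (α := Fin (n + 1))).toEquiv.symm
      (by
        intro d
        show d.degree = m ↔ _
        rw [hcard d]
        rfl)
  letI : Fintype M := Fintype.ofEquiv _ e1.symm
  have hMcard : Fintype.card M = R + 1 := by
    rw [Fintype.card_congr e1, Sym.card_sym_eq_choose, Fintype.card_fin, hR]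
    have h1 : n + 1 + m - 1 = n + m := by omega
    have h2 : (n + m).choose m = (n + m).choose n := by
      rw [← Nat.choose_symm (Nat.le_add_left m n)]
      congr 1
      omega
    rw [h1, h2]
  let e : Fin (R + 1) ≃ M := Fintype.equivOfCardEq (by rw [hMcard, Fintype.card_fin])
  refine ⟨fun j => (e j).1, ?_, fun j => (e j).2, ?_⟩
  · intro a b hab
    exact e.injective (Subtype.ext hab)
  · intro d hd
    exact ⟨e.symm ⟨d, hd⟩, by simp⟩

/-- degree as a sum over all of `Fin (n+1)`. -/
lemma degree_eq_sum_univ {n : ℕ} (d : Fin (n + 1) →₀ ℕ) : d.degree = ∑ k, d k := by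
  rw [Finsupp.degree]
  exact (Finset.sum_subset (Finset.subset_univ _) (by
    intro k _ hk
    simpa using Finsupp.notMem_support_iff.mp hk))

lemma degree_single {n m : ℕ} (k : Fin (n + 1)) :
    (Finsupp.single k m).degree = m := by
  rw [degree_eq_sum_univ]
  rw [Finset.sum_eq_single k]
  · exact Finsupp.single_eq_same
  · intro b _ hb; exact Finsupp.single_eq_of_ne' (Ne.symm hb)
  · intro h; exact absurd (Finset.mem_univ k) h

end AuxSup
section AuxEval

open MvPolynomial

/-- Evaluation of (the image of) a homogeneous polynomial as a sum over an indexing of the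
degree-`m` monomials. -/
lemma aeval_homog {n R m : ℕ} {F Kb : Type*} [CommSemiring F] [CommSemiring Kb] (φ : F →+* Kb)
    (α : Fin (R + 1) → (Fin (n + 1) →₀ ℕ)) (hinj : Function.Injective α)
    (hcover : ∀ d : Fin (n + 1) →₀ ℕ, d.degree = m → ∃ j, α j = d)
    (p : MvPolynomial (Fin (n + 1)) F) (hp : p.IsHomogeneous m)
    (z : Fin (n + 1) → Kb) :
    MvPolynomial.aeval z (MvPolynomial.map φ p)
      = ∑ j, φ (MvPolynomial.coeff (α j) p) * ∏ k, z k ^ α j k := by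
  classical
  set q := MvPolynomial.map φ p with hq
  have haev : MvPolynomial.aeval z q = MvPolynomial.eval z q := by
    rw [← MvPolynomial.coe_aeval_eq_eval]
    rfl
  rw [haev, MvPolynomial.eval_eq' z q]
  have hsupp : q.support ⊆ Finset.univ.image α := by
    intro d hd
    have hdeg : d.degree = m := by
      by_contra hne
      have h0 : MvPolynomial.coeff d p = 0 := hp.coeff_eq_zero hne
      have h1 : MvPolynomial.coeff d q = 0 := by
        rw [hq, MvPolynomial.coeff_map, h0, map_zero]
      exact MvPolynomial.mem_support_iff.mp hd h1
    obtain ⟨j, hj⟩ := hcover d hdeg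
    exact Finset.mem_image.mpr ⟨j, Finset.mem_univ j, hj⟩
  rw [Finset.sum_subset hsupp (by
    intro d _ hd
    rw [MvPolynomial.notMem_support_iff.mp hd, zero_mul])]
  rw [Finset.sum_image (fun a _ b _ h => hinj h)]
  apply Finset.sum_congr rfl
  intro j _
  rw [hq, MvPolynomial.coeff_map]

end AuxEval
section AuxLinIndep

open MvPolynomial

lemma linIndep_coeff_map {R n m : ℕ} {F Kb : Type*} [Field F] [Field Kb] (φ : F →+* Kb)
    (α : Fin (R + 1) → (Fin (n + 1) →₀ ℕ)) (hinj : Function.Injective α)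
    (hcover : ∀ d : Fin (n + 1) →₀ ℕ, d.degree = m → ∃ j, α j = d)
    (s : Fin (R + 1) → MvPolynomial (Fin (n + 1)) F) (hhom : ∀ i, (s i).IsHomogeneous m)
    (hli : LinearIndependent F s) :
    LinearIndependent Kb (fun i => fun j => φ (MvPolynomial.coeff (α j) (s i))) := by
  classical
  set A : Matrix (Fin (R + 1)) (Fin (R + 1)) F :=
    Matrix.of (fun i j => MvPolynomial.coeff (α j) (s i)) with hA
  have hrows : LinearIndependent F (fun i => A i) := by
    refine Fintype.linearIndependent_iff.mpr ?_
    intro g hg i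
    refine Fintype.linearIndependent_iff.mp hli g ?_ i
    have hcoeffs : ∀ j, ∑ i, g i * MvPolynomial.coeff (α j) (s i) = 0 := by
      intro j
      have := congrFun hg j
      simpa [Finset.sum_apply, hA] using this
    have hzero : (∑ i, g i • s i) = 0 := by
      apply MvPolynomial.ext
      intro d
      rw [MvPolynomial.coeff_sum]
      simp only [MvPolynomial.coeff_smul, smul_eq_mul, MvPolynomial.coeff_zero]
      by_cases hd : d.degree = m
      · obtain ⟨j, rfl⟩ := hcover d hd
        exact hcoeffs j
      · apply Finset.sum_eq_zero
        intro i _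
        rw [(hhom i).coeff_eq_zero hd, mul_zero]
    exact hzero
  have hunit : IsUnit A := Matrix.linearIndependent_rows_iff_isUnit.mp hrows
  have hdet : A.det ≠ 0 := by
    have := (Matrix.isUnit_iff_isUnit_det A).mp hunit
    exact IsUnit.ne_zero this
  have hdet2 : (A.map φ).det ≠ 0 := by
    have : (A.map φ).det = φ A.det := by
      rw [RingHom.map_det]
      rfl
    rw [this]
    intro h
    exact hdet (RingHom.injective φ (by rw [h, map_zero]))
  have hunit2 : IsUnit (A.map φ) := by
    rw [Matrix.isUnit_iff_isUnit_det (A.map φ)]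
    exact isUnit_iff_ne_zero.mpr hdet2
  exact Matrix.linearIndependent_rows_iff_isUnit.mpr hunit2

end AuxLinIndep

/-- Fix positive integers `n, m, d` and a real `c > 0`, and let
`R = C(n+m, n) - 1`, so that `R + 1` is the number of degree-`m` monomials in `n + 1`
variables.  If the Schlickewei-type hypothesis for `ℙ^R`, degree `d` and constant `c` holds
over every number field `K`, then for every number field `K`, every finite extension `F` of
`K` inside `K̄`, every finite set `S` of places of `K` with fixed extensions `f v` of the
normalized absolute values to `K̄`, every choice for each `v ∈ S` of `R + 1` homogeneous
forms `s v i ∈ F[x_0, …, x_n]` of degree `m`, linearly independent over `F`, and every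
`δ > 0`, there are a constant `C'` and finitely many subsets of `ℙ^n(K̄)`, each the common
zero locus of a nonzero linear space `Φ i` of degree-`m` homogeneous forms with coefficients
in an extension `E i` of `K` of degree at most `d`, such that every point of `ℙ^n(K̄)` of
degree at most `d` over `K` (represented by a nonzero coordinate vector `x` over an
intermediate number field `F'` with `[F' : K] ≤ d`) with `s_{v,i}(x) ≠ 0` for all `v, i` and
satisfying `Σ_{v ∈ S} Σ_i log((max_j |x_j|_v)^m / |s_{v,i}(x)|_v) > (c + δ)·m·h(x) + C'`
lies in one of these zero loci. -/
theorem schlickewei_implies_degree_m_forms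
    (n m d : ℕ) (hn : 0 < n) (hm : 0 < m) (hd : 0 < d) (c : ℝ) (hc : 0 < c)
    (R : ℕ) (hR : R + 1 = (n + m).choose n)
    (hyp : ∀ (K : Type) [Field K] [NumberField K], SchlickeweiLinearHyp d R c K) :
    ∀ (K : Type) [Field K] [NumberField K],
      ∀ (F : IntermediateField K (AlgebraicClosure K)), FiniteDimensional K F →
      ∀ (S : Finset (NFPlace K)) (f : NFPlace K → AlgebraicClosure K → ℝ),
        (∀ v ∈ S, IsPlaceExtension K v (f v)) →
        ∀ s : NFPlace K → Fin (R + 1) → MvPolynomial (Fin (n + 1)) F,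
          (∀ v ∈ S, ∀ i : Fin (R + 1), (s v i).IsHomogeneous m) →
          (∀ v ∈ S, LinearIndependent F (s v)) →
          ∀ δ : ℝ, 0 < δ →
            ∃ (C' : ℝ) (h : ℕ) (E : Fin h → IntermediateField K (AlgebraicClosure K))
                (Φ : (i : Fin h) → Submodule (E i) (MvPolynomial (Fin (n + 1)) (E i))),
              (∀ i, FiniteDimensional K (E i) ∧ Module.finrank K (E i) ≤ d) ∧
              (∀ i, Φ i ≠ ⊥) ∧
              (∀ i, ∀ φ ∈ Φ i, φ.IsHomogeneous m) ∧
              (∀ (F' : IntermediateField K (AlgebraicClosure K)) [NumberField F'],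
                Module.finrank K F' ≤ d →
                ∀ x : Fin (n + 1) → F', x ≠ 0 →
                  (∀ v ∈ S, ∀ i : Fin (R + 1),
                    MvPolynomial.aeval (fun j => (x j : AlgebraicClosure K))
                      (MvPolynomial.map (algebraMap F (AlgebraicClosure K)) (s v i)) ≠ 0) →
                  (c + δ) * (m : ℝ) * logHeightVec F' x + C' <
                      ∑ v ∈ S, ∑ i : Fin (R + 1),
                        Real.log
                          ((Finset.univ.sup' ⟨0, Finset.mem_univ 0⟩ fun j =>
                              f v (x j : AlgebraicClosure K)) ^ m /
                            f v (MvPolynomial.aeval (fun j => (x j : AlgebraicClosure K))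
                              (MvPolynomial.map (algebraMap F (AlgebraicClosure K)) (s v i)))) →
                  ∃ i : Fin h, ∀ φ ∈ Φ i,
                    MvPolynomial.aeval (fun j => (x j : AlgebraicClosure K))
                      (MvPolynomial.map (algebraMap (E i) (AlgebraicClosure K)) φ) = 0) := by
  intro K _ _ F _hFfd S f hf s hshom hsli δ hδ
  classical
  obtain ⟨α, hαinj, hαdeg, hαcover⟩ := exists_mon_index n m R hR
  have hαdeg' : ∀ j, ∑ k, α j k = m := by
    intro j; rw [← degree_eq_sum_univ]; exact hαdeg j
  have hsingle : ∀ k : Fin (n + 1), ∃ j, α j = Finsupp.single k m := fun k =>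
    hαcover _ (degree_single k)
  set φF : F →+* AlgebraicClosure K := algebraMap F (AlgebraicClosure K) with hφF
  set ℓ : NFPlace K → Fin (R + 1) → Fin (R + 1) → AlgebraicClosure K :=
    fun v i j => φF (MvPolynomial.coeff (α j) (s v i)) with hℓ
  have hℓli : ∀ v ∈ S, LinearIndependent (AlgebraicClosure K) (ℓ v) := fun v hv =>
    linIndep_coeff_map φF α hαinj hαcover (s v) (hshom v hv) (hsli v hv)
  obtain ⟨C, h, E, Φlin, hEdim, hΦne, hmain⟩ := hyp K S f hf ℓ hℓli δ hδ
  refine ⟨C, h, E, fun i => Submodule.span (E i)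
      ((fun ψ : Fin (R + 1) → E i => ∑ j, MvPolynomial.monomial (α j) (ψ j)) '' Φlin i),
    hEdim, ?_, ?_, ?_⟩
  · -- nontriviality
    intro i
    obtain ⟨ψ, hψmem, hψne⟩ := hΦne i
    set P : MvPolynomial (Fin (n + 1)) (E i) := ∑ j, MvPolynomial.monomial (α j) (ψ j) with hP
    have hPmem : P ∈ Submodule.span (E i)
        ((fun ψ : Fin (R + 1) → E i => ∑ j, MvPolynomial.monomial (α j) (ψ j)) '' Φlin i) :=
      Submodule.subset_span ⟨ψ, hψmem, rfl⟩
    obtain ⟨j₀, hj₀⟩ := Function.ne_iff.mp hψne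
    have hcoeff : MvPolynomial.coeff (α j₀) P = ψ j₀ := by
      rw [hP, MvPolynomial.coeff_sum]
      rw [Finset.sum_eq_single j₀]
      · rw [MvPolynomial.coeff_monomial, if_pos rfl]
      · intro j _ hj
        rw [MvPolynomial.coeff_monomial, if_neg (fun hc => hj (hαinj hc))]
      · intro habs; exact absurd (Finset.mem_univ j₀) habs
    have hPne : P ≠ 0 := by
      intro h0
      rw [h0, MvPolynomial.coeff_zero] at hcoeff
      exact hj₀ hcoeff.symm
    exact (Submodule.ne_bot_iff _).mpr ⟨P, hPmem, hPne⟩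
  · -- homogeneity
    intro i P hPmem
    have hle : Submodule.span (E i)
        ((fun ψ : Fin (R + 1) → E i => ∑ j, MvPolynomial.monomial (α j) (ψ j)) '' Φlin i)
        ≤ MvPolynomial.homogeneousSubmodule (Fin (n + 1)) (E i) m := by
      rw [Submodule.span_le]
      rintro _ ⟨ψ, _, rfl⟩
      rw [SetLike.mem_coe, MvPolynomial.mem_homogeneousSubmodule]
      apply MvPolynomial.IsHomogeneous.sum
      intro j _
      exact MvPolynomial.isHomogeneous_monomial _ (hαdeg j)
    exact (MvPolynomial.mem_homogeneousSubmodule _ _).mp (hle hPmem)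
  · -- main implication
    intro F' _ hF'd x hx hnv hineq
    set y : Fin (R + 1) → F' := fun j => ∏ k, x k ^ α j k with hy
    have hycast : ∀ j, ((y j : AlgebraicClosure K))
        = ∏ k, (x k : AlgebraicClosure K) ^ α j k := by
      intro j
      rw [hy]
      push_cast
      rfl
    have key_eval : ∀ v ∈ S, ∀ i : Fin (R + 1),
        (∑ j, ℓ v i j * (y j : AlgebraicClosure K))
          = MvPolynomial.aeval (fun k => (x k : AlgebraicClosure K))
              (MvPolynomial.map φF (s v i)) := by
      intro v hv i
      rw [aeval_homog φF α hαinj hαcover (s v i) (hshom v hv i)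
        (fun k => (x k : AlgebraicClosure K))]
      apply Finset.sum_congr rfl
      intro j _
      rw [hℓ, hycast j]
    -- y is nonzero
    obtain ⟨k₀, hk₀⟩ := Function.ne_iff.mp hx
    obtain ⟨j₀, hj₀⟩ := hsingle k₀
    have hyj₀ : y j₀ = x k₀ ^ m := by
      show (∏ k, x k ^ α j₀ k) = x k₀ ^ m
      rw [hj₀]
      rw [Finset.prod_eq_single k₀]
      · rw [Finsupp.single_eq_same]
      · intro k _ hk
        rw [Finsupp.single_eq_of_ne' (Ne.symm hk), pow_zero]
      · intro habs; exact absurd (Finset.mem_univ k₀) habs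
    have hy0 : y ≠ 0 := by
      apply Function.ne_iff.mpr
      refine ⟨j₀, ?_⟩
      rw [hyj₀]
      exact pow_ne_zero m hk₀
    -- height identity
    have hplace : ∀ p : NFPlace F',
        (Finset.univ.sup' ⟨0, Finset.mem_univ 0⟩ fun j => placeVal p (y j))
          = (Finset.univ.sup' ⟨0, Finset.mem_univ 0⟩ fun k => placeVal p (x k)) ^ m := by
      intro p
      exact sup'_monomial_pow (placeVal p) (placeVal_mul p) (placeVal_one p)
        (placeVal_nonneg p) α hαdeg' hsingle x
    have hH : logHeightVec F' y = (m : ℝ) * logHeightVec F' x := by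
      simp only [logHeightVec]
      have h1 : (∑ w : InfinitePlace F',
          Real.log (Finset.univ.sup' ⟨0, Finset.mem_univ 0⟩ fun j =>
            placeVal (Sum.inl w) (y j)))
          = (m : ℝ) * ∑ w : InfinitePlace F',
              Real.log (Finset.univ.sup' ⟨0, Finset.mem_univ 0⟩ fun j =>
                placeVal (Sum.inl w) (x j)) := by
        rw [Finset.mul_sum]
        apply Finset.sum_congr rfl
        intro w _
        rw [hplace (Sum.inl w), Real.log_pow]
      have h2 : (∑ᶠ v : HeightOneSpectrum (𝓞 F'),
          Real.log (Finset.univ.sup' ⟨0, Finset.mem_univ 0⟩ fun j =>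
            placeVal (Sum.inr v) (y j)))
          = (m : ℝ) * ∑ᶠ v : HeightOneSpectrum (𝓞 F'),
              Real.log (Finset.univ.sup' ⟨0, Finset.mem_univ 0⟩ fun j =>
                placeVal (Sum.inr v) (x j)) := by
        have hcongr : ∀ v : HeightOneSpectrum (𝓞 F'),
            Real.log (Finset.univ.sup' ⟨0, Finset.mem_univ 0⟩ fun j =>
              placeVal (Sum.inr v) (y j))
            = (m : ℝ) • Real.log (Finset.univ.sup' ⟨0, Finset.mem_univ 0⟩ fun j =>
                placeVal (Sum.inr v) (x j)) := by
          intro v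
          rw [smul_eq_mul, hplace (Sum.inr v), Real.log_pow]
        rw [finsum_congr hcongr, ← smul_finsum, smul_eq_mul]
      rw [h1, h2]
      ring
    -- sup identity for the extended absolute values
    have hfv : ∀ v ∈ S,
        (Finset.univ.sup' ⟨0, Finset.mem_univ 0⟩ fun j => f v (y j : AlgebraicClosure K))
          = (Finset.univ.sup' ⟨0, Finset.mem_univ 0⟩ fun k =>
              f v (x k : AlgebraicClosure K)) ^ m := by
      intro v hv
      obtain ⟨hmul, hpos, hres⟩ := hf v hv
      have h1 : f v 1 = 1 := by
        have := hres 1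
        rw [map_one] at this
        rw [this, placeVal_one]
      have hsup := sup'_monomial_pow (f v) hmul h1 hpos α hαdeg' hsingle
        (fun k => (x k : AlgebraicClosure K))
      rw [← hsup]
      apply Finset.sup'_congr _ rfl
      intro j _
      rw [hycast j]
    -- the hypotheses of hmain
    have hhyp : ∀ v ∈ S, ∀ i : Fin (R + 1),
        (∑ j, ℓ v i j * (y j : AlgebraicClosure K)) ≠ 0 := by
      intro v hv i
      rw [key_eval v hv i]
      exact hnv v hv i
    have hineq2 : (c + δ) * logHeightVec F' y + C <
        ∑ v ∈ S, ∑ i : Fin (R + 1),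
          Real.log
            ((Finset.univ.sup' ⟨0, Finset.mem_univ 0⟩ fun j =>
                f v (y j : AlgebraicClosure K)) /
              f v (∑ j, ℓ v i j * (y j : AlgebraicClosure K))) := by
      have hrhs : (∑ v ∈ S, ∑ i : Fin (R + 1),
          Real.log
            ((Finset.univ.sup' ⟨0, Finset.mem_univ 0⟩ fun j =>
                f v (y j : AlgebraicClosure K)) /
              f v (∑ j, ℓ v i j * (y j : AlgebraicClosure K))))
          = ∑ v ∈ S, ∑ i : Fin (R + 1),
              Real.log
                ((Finset.univ.sup' ⟨0, Finset.mem_univ 0⟩ fun j =>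
                    f v (x j : AlgebraicClosure K)) ^ m /
                  f v (MvPolynomial.aeval (fun j => (x j : AlgebraicClosure K))
                    (MvPolynomial.map (algebraMap F (AlgebraicClosure K)) (s v i)))) := by
        apply Finset.sum_congr rfl
        intro v hv
        apply Finset.sum_congr rfl
        intro i _
        rw [hfv v hv, key_eval v hv i]
      rw [hrhs, hH, ← mul_assoc]
      exact hineq
    obtain ⟨i, hi⟩ := hmain F' hF'd y hy0 hhyp hineq2
    refine ⟨i, ?_⟩
    intro P hPmem
    rw [MvPolynomial.aeval_map_algebraMap]
    have hker : Submodule.span (E i)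
        ((fun ψ : Fin (R + 1) → E i => ∑ j, MvPolynomial.monomial (α j) (ψ j)) '' Φlin i)
        ≤ LinearMap.ker ((MvPolynomial.aeval (fun j => (x j : AlgebraicClosure K)) :
            MvPolynomial (Fin (n + 1)) (E i) →ₐ[E i] AlgebraicClosure K).toLinearMap) := by
      rw [Submodule.span_le]
      rintro _ ⟨ψ, hψmem, rfl⟩
      rw [SetLike.mem_coe, LinearMap.mem_ker, AlgHom.toLinearMap_apply]
      rw [map_sum]
      have hterm : ∀ j : Fin (R + 1),
          MvPolynomial.aeval (fun j => (x j : AlgebraicClosure K))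
            (MvPolynomial.monomial (α j) (ψ j))
          = (ψ j : AlgebraicClosure K) * (y j : AlgebraicClosure K) := by
        intro j
        rw [MvPolynomial.aeval_monomial, hycast j]
        congr 1
        rw [Finsupp.prod_fintype]
        intro k
        exact pow_zero _
      rw [Finset.sum_congr rfl (fun j _ => hterm j)]
      exact hi ψ hψmem
    have := hker hPmem
    rw [LinearMap.mem_ker, AlgHom.toLinearMap_apply] at this
    exact this
end

section
/- Let n and b be positive integers, let σ be a nonempty finite set with |σ| ≤ n, let (γ_i)_{i∈σ} be positive real numbers and (t_i)_{i∈σ} nonnegative real numbers such that Σ_{i∈σ} t_i/γ_i = 1. Then there exist natural numbers (k_i)_{i∈σ} with Σ_{i∈σ} k_i = b and γ_i·k_i ≤ (b+n)·t_i for every i ∈ σ. Equivalently, setting β_i = 1/γ_i and a_i = γ_i·k_i, there exists a = (a_i) with a_i ∈ γ_i·ℕ, Σ_{i∈σ} β_i·a_i = b, and t_i ≥ a_i/(b+n) for all i ∈ σ. -/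
/-! The numbers `r i = (b + n) * t i / γ i` sum to `b + n`. Rounding each of them down loses less
than `1`, so at most `#σ ≤ n` in total, hence `∑ ⌊r i⌋₊ ≥ b`; lowering some of the floors gives
natural numbers `k i ≤ r i` summing to exactly `b`, and `k i ≤ r i` is the required inequality. -/

open Finset

theorem Finset.exists_le_sum_eq_of_le_sum {ι M : Type*} [AddCommMonoid M] [LinearOrder M]
    [CanonicallyOrderedAdd M] [Sub M] [OrderedSub M]
    (s : Finset ι) (k : ι → M) {b : M} (hb : b ≤ ∑ i ∈ s, k i) :
    ∃ k' : ι → M, k' ≤ k ∧ ∑ i ∈ s, k' i = b := by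
  classical
  induction s using Finset.induction_on generalizing b with
  | empty => exact ⟨0, fun _ => zero_le, by simpa [eq_comm] using hb⟩
  | insert a s ha ih =>
    -- take as much of `b` as `s` allows, and the remainder at `a`
    obtain ⟨k', hk'_le, hk'_sum⟩ := ih (min_le_right b (∑ i ∈ s, k i))
    refine ⟨Function.update k' a (b - min b (∑ i ∈ s, k i)), fun i => ?_, ?_⟩
    · rcases eq_or_ne i a with rfl | hi
      · rw [Function.update_self, tsub_le_iff_right]
        rw [sum_insert ha] at hb
        rcases le_total b (∑ i ∈ s, k i) with h | h
        · simp [h]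
        · simpa [h] using hb
      · simpa [Function.update_of_ne hi] using hk'_le i
    · rw [sum_insert ha, Function.update_self, sum_update_of_notMem ha, hk'_sum,
        tsub_add_cancel_of_le (min_le_left _ _)]

theorem Finset.sum_le_sum_natFloor_add_card {ι α : Type*} [Semiring α] [LinearOrder α]
    [IsStrictOrderedRing α] [FloorSemiring α] (s : Finset ι) (r : ι → α) :
    ∑ i ∈ s, r i ≤ ∑ i ∈ s, (⌊r i⌋₊ : α) + #s := by
  calc ∑ i ∈ s, r i ≤ ∑ i ∈ s, ((⌊r i⌋₊ : α) + 1) :=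
        sum_le_sum fun i _ => (Nat.lt_floor_add_one (r i)).le
    _ = ∑ i ∈ s, (⌊r i⌋₊ : α) + #s := by rw [sum_add_distrib, sum_const, nsmul_one]

theorem exists_delta_sigma_element_general {ι : Type*} (n b : ℕ)
    (σ : Finset ι) (hcard : σ.card ≤ n)
    (γ : ι → ℝ) (hγ : ∀ i ∈ σ, 0 < γ i)
    (t : ι → ℝ) (ht : ∀ i ∈ σ, 0 ≤ t i)
    (hsum : ∑ i ∈ σ, t i / γ i = 1) :
    ∃ k : ι → ℕ, ∑ i ∈ σ, k i = b ∧
      ∀ i ∈ σ, γ i * (k i : ℝ) ≤ ((b : ℝ) + (n : ℝ)) * t i := by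
  set r : ι → ℝ := fun i => ((b : ℝ) + n) * t i / γ i with hr
  have hr_nonneg : ∀ i ∈ σ, 0 ≤ r i := fun i hi =>
    div_nonneg (mul_nonneg (by positivity) (ht i hi)) (hγ i hi).le
  have hr_sum : ∑ i ∈ σ, r i = b + n := by
    simp_rw [hr, mul_div_assoc, ← mul_sum, hsum, mul_one]
  have hb_le : b ≤ ∑ i ∈ σ, ⌊r i⌋₊ := by
    have hfloor := sum_le_sum_natFloor_add_card σ r
    have hcard' : (#σ : ℝ) ≤ n := by exact_mod_cast hcard
    exact_mod_cast (show (b : ℝ) ≤ ∑ i ∈ σ, (⌊r i⌋₊ : ℝ) by linarith)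
  obtain ⟨k, hk_le, hk_sum⟩ := exists_le_sum_eq_of_le_sum σ _ hb_le
  refine ⟨k, hk_sum, fun i hi => ?_⟩
  calc γ i * (k i : ℝ) ≤ γ i * r i :=
        mul_le_mul_of_nonneg_left ((Nat.cast_le.2 (hk_le i)).trans (Nat.floor_le (hr_nonneg i hi)))
          (hγ i hi).le
    _ = ((b : ℝ) + n) * t i := mul_div_cancel₀ _ (hγ i hi).ne'

/-- Let `n` and `b` be positive integers, let `σ` be a nonempty finite set
with `|σ| ≤ n`, let `(γ_i)_{i ∈ σ}` be positive reals and `(t_i)_{i ∈ σ}` nonnegative reals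
with `∑_{i ∈ σ} t_i / γ_i = 1`.  Then there exist natural numbers `(k_i)_{i ∈ σ}` with
`∑_{i ∈ σ} k_i = b` and `γ_i · k_i ≤ (b + n) · t_i` for every `i ∈ σ`.  (Setting
`a_i = γ_i · k_i`, this is an element `a` of `Δ_σ` with `t_i ≥ a_i / (b + n)` for all `i`.) -/
theorem exists_delta_sigma_element {ι : Type*} (n b : ℕ) (hn : 0 < n) (hb : 0 < b)
    (σ : Finset ι) (hσ : σ.Nonempty) (hcard : σ.card ≤ n)
    (γ : ι → ℝ) (hγ : ∀ i ∈ σ, 0 < γ i)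
    (t : ι → ℝ) (ht : ∀ i ∈ σ, 0 ≤ t i)
    (hsum : ∑ i ∈ σ, t i / γ i = 1) :
    ∃ k : ι → ℕ, ∑ i ∈ σ, k i = b ∧
      ∀ i ∈ σ, γ i * (k i : ℝ) ≤ ((b : ℝ) + (n : ℝ)) * t i :=
  exists_delta_sigma_element_general n b σ hcard γ hγ t ht hsum
end
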